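/- arXiv:2504.20634 — 6 statements merged into one kernel-verified Lean document; each statement's English description precedes it below -/
import Mathlib

section
/- For every natural number N ≥ 1, the bias of SRFF with N random bits on uniformly distributed real inputs equals -2^{-(N+1)}; precisely, 2^{-N} · Σ_{n=0}^{2^N - 1} (∫₀¹ 𝟙[x + n·2^{-N} ≥ 1] dx) - 1/2 = -2^{-(N+1)}. -/
/-! For a fixed offset `c = n / 2^N ∈ [0, 1]`, a uniform `x ∈ [0, 1]` is rounded up exactly on
`[1 - c, 1]`, so with probability `c`. Averaging over the grid of offsets gives
`(2^N - 1) / 2^(N+1)`, which falls short of the mean `1/2` of `x` by `2^-(N+1)`. -/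

open MeasureTheory Finset

lemma intervalIntegral_indicator_Ici_one {a b t : ℝ} (hat : a ≤ t) (htb : t ≤ b) :
    ∫ x in a..b, (Set.Ici t).indicator 1 x = b - t := by
  have hae : (Set.Ici t ∩ Set.Ioc a b : Set ℝ) =ᵐ[volume] Set.Ioc t b := by
    have hIoc : Set.Ioi t ∩ Set.Ioc a b = Set.Ioc t b := by
      rw [Set.inter_comm, Set.Ioc_inter_Ioi, max_eq_right hat]
    exact hIoc ▸ ae_eq_set_inter Ioi_ae_eq_Ici.symm (ae_eq_refl _)
  rw [intervalIntegral.integral_of_le (hat.trans htb), integral_indicator_one measurableSet_Ici,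
    measureReal_restrict_apply measurableSet_Ici, measureReal_congr hae,
    Real.volume_real_Ioc_of_le htb]

lemma inv_mul_sum_range_mul_inv_sub_half {M : ℕ} (hM : M ≠ 0) :
    (M : ℝ)⁻¹ * ∑ n ∈ range M, (n : ℝ) * (M : ℝ)⁻¹ - 1 / 2 = -(2 * (M : ℝ))⁻¹ := by
  have hgauss := sum_range_id_mul_two M
  rify [Nat.one_le_iff_ne_zero.mpr hM] at hgauss
  rw [← sum_mul]
  field_simp
  linarith

lemma integral_ite_add_ge_one {c : ℝ} (hc0 : 0 ≤ c) (hc1 : c ≤ 1) :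
    ∫ x in (0:ℝ)..1, (if x + c ≥ 1 then (1:ℝ) else 0) = c := by
  have hind : (fun x : ℝ => if x + c ≥ 1 then (1:ℝ) else 0) = (Set.Ici (1 - c)).indicator 1 := by
    ext x
    simp [Set.indicator_apply]
  rw [hind, intervalIntegral_indicator_Ici_one (by linarith) (by linarith), sub_sub_cancel]

theorem srff_bias_infinite_inputs_general (N : ℕ) :
    ((2:ℝ)^N)⁻¹ *
      (∑ n ∈ Finset.range (2^N),
        (∫ x in (0:ℝ)..1, (if x + (n:ℝ) * ((2:ℝ)^N)⁻¹ ≥ 1 then (1:ℝ) else 0)))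
      - 1/2 = -((2:ℝ)^(N+1))⁻¹ := by
  have hprob : ∀ n ∈ range (2 ^ N),
      ∫ x in (0:ℝ)..1, (if x + (n:ℝ) * ((2:ℝ)^N)⁻¹ ≥ 1 then (1:ℝ) else 0)
        = (n:ℝ) * ((2:ℝ)^N)⁻¹ := by
    intro n hn
    have hn' : (n:ℝ) ≤ 2 ^ N := by exact_mod_cast (mem_range.mp hn).le
    exact integral_ite_add_ge_one (by positivity) (mul_inv_le_one_of_le₀ hn' (by positivity))
  have hmean := inv_mul_sum_range_mul_inv_sub_half (pow_ne_zero N two_ne_zero)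
  push_cast at hmean
  rw [sum_congr rfl hprob, hmean, pow_succ, mul_comm]

theorem srff_bias_infinite_inputs (N : ℕ) (hN : 1 ≤ N) :
    ((2:ℝ)^N)⁻¹ *
      (∑ n ∈ Finset.range (2^N),
        (∫ x in (0:ℝ)..1, (if x + (n:ℝ) * ((2:ℝ)^N)⁻¹ ≥ 1 then (1:ℝ) else 0)))
      - 1/2 = -((2:ℝ)^(N+1))⁻¹ :=
  srff_bias_infinite_inputs_general N
end

section
/- For every natural number N ≥ 1, SRF with N random bits is unbiased on uniformly distributed real inputs; precisely, 2^{-N} · Σ_{n=0}^{2^N - 1} (∫₀¹ 𝟙[x + (n + 1/2)·2^{-N} ≥ 1] dx) - 1/2 = 0. -/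
/-!
For an offset `c ∈ [0, 1]`, a uniform `x ∈ [0, 1]` satisfies `x + c ≥ 1` with probability `c`.
With `N` random bits the offsets are the midpoints `(n + 1/2) / 2^N` of the dyadic intervals,
whose mean is exactly `1/2`.
-/

open MeasureTheory Finset

theorem intervalIntegral_ite_add_ge_one {c : ℝ} (hc₀ : 0 ≤ c) (hc₁ : c ≤ 1) :
    ∫ x in (0:ℝ)..1, (if x + c ≥ 1 then (1:ℝ) else 0) = c := by
  have hind : (fun x : ℝ => if x + c ≥ 1 then (1:ℝ) else 0) = (Set.Ici (1 - c)).indicator 1 := by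
    ext x
    simp only [Set.indicator_apply, Set.mem_Ici, Pi.one_apply, ge_iff_le, sub_le_iff_le_add]
  have hset : Set.Ici (1 - c) ∩ Set.Icc 0 1 = Set.Icc (1 - c) 1 := by
    rw [← Set.Ici_inter_Iic, ← Set.inter_assoc, Set.Ici_inter_Ici, Set.Ici_inter_Iic,
      max_eq_left (by linarith)]
  rw [hind, intervalIntegral.integral_of_le zero_le_one, ← integral_Icc_eq_integral_Ioc,
    integral_indicator_one measurableSet_Ici, measureReal_restrict_apply measurableSet_Ici, hset,
    Real.volume_real_Icc]
  simp [hc₀]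

theorem sum_range_add_half (M : ℕ) : ∑ n ∈ range M, ((n : ℝ) + 1 / 2) = M ^ 2 / 2 := by
  induction M with
  | zero => simp
  | succ M ih => rw [sum_range_succ, ih]; push_cast; ring

theorem srf_unbiased_infinite_inputs_general (N : ℕ) :
    ((2:ℝ)^N)⁻¹ *
      (∑ n ∈ Finset.range (2^N),
        (∫ x in (0:ℝ)..1, (if x + ((n:ℝ) + 1/2) * ((2:ℝ)^N)⁻¹ ≥ 1 then (1:ℝ) else 0)))
      - 1/2 = 0 := by
  have hpow : (0:ℝ) < 2 ^ N := by positivity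
  have hoffset : ∀ n ∈ range (2 ^ N), ((n:ℝ) + 1/2) * ((2:ℝ)^N)⁻¹ ≤ 1 := by
    intro n hn
    have hn' : (n:ℝ) + 1 ≤ 2 ^ N := by exact_mod_cast mem_range.mp hn
    rw [← div_eq_mul_inv, div_le_one hpow]
    linarith
  rw [sum_congr rfl fun n hn => intervalIntegral_ite_add_ge_one (by positivity) (hoffset n hn),
    ← sum_mul, sum_range_add_half]
  push_cast
  field_simp
  ring

theorem srf_unbiased_infinite_inputs (N : ℕ) (hN : 1 ≤ N) :
    ((2:ℝ)^N)⁻¹ *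
      (∑ n ∈ Finset.range (2^N),
        (∫ x in (0:ℝ)..1, (if x + ((n:ℝ) + 1/2) * ((2:ℝ)^N)⁻¹ ≥ 1 then (1:ℝ) else 0)))
      - 1/2 = 0 :=
  srf_unbiased_infinite_inputs_general N
end

section
/- For natural numbers N, D ≥ 1, the bias of SRFF with N random bits on inputs uniformly distributed over the grid {i·2^{-D} : i = 0,...,2^D - 1} equals 2^{-N} · Σ_{n=0}^{2^N-1} 2^{-D} · ⌊2^{D-N} n⌋ - (1 - 2^{-D})/2, and this quantity is at most (2^{-D} - 2^{-N})/2. -/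
/-!
For a fixed random level `n < K`, the grid point `i / M` is rounded up iff `M - (M / K) n ≤ i`,
so exactly `⌊(M / K) n⌋` of the `M` grid points are rounded up. Exchanging the two sums turns the
bias into the mean of these floors minus the mean `(M - 1) / (2M)` of the grid, and `⌊y⌋ ≤ y`
together with `∑_{n<K} n = K (K - 1) / 2` gives the bound.
-/

open Finset

theorem card_filter_range_le_add (M : ℕ) {x : ℝ} (hx : x < M + 1) :
    ((range M).filter fun i : ℕ => (M : ℝ) ≤ i + x).card = ⌊x⌋₊ := by
  have hfloor : ⌊x⌋₊ ≤ M :=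
    Nat.lt_succ_iff.mp ((Nat.floor_lt' M.succ_ne_zero).2 (by push_cast; exact hx))
  have hmem : ∀ i < M, (M : ℝ) ≤ i + x ↔ M - ⌊x⌋₊ ≤ i := fun i hi => by
    rw [← sub_le_iff_le_add', ← Nat.cast_sub hi.le, ← Nat.le_floor_iff' (by omega)]
    omega
  have hfilter : ((range M).filter fun i : ℕ => (M : ℝ) ≤ i + x) = Ico (M - ⌊x⌋₊) M := by
    ext i
    simp only [mem_filter, mem_range, mem_Ico]
    exact ⟨fun ⟨hi, h⟩ => ⟨(hmem i hi).1 h, hi⟩, fun ⟨h, hi⟩ => ⟨hi, (hmem i hi).2 h⟩⟩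
  rw [hfilter, Nat.card_Ico]
  omega

theorem sum_range_natCast_mul_two {R : Type*} [CommRing R] (n : ℕ) :
    (∑ i ∈ range n, (i : R)) * 2 = n * (n - 1) := by
  induction n with
  | zero => simp
  | succ n ih =>
    rw [sum_range_succ, add_mul, ih]
    push_cast
    ring

theorem sum_range_ite_add_ge_one (M K n : ℕ) (hn : n < K) :
    ∑ i ∈ range M, (if (i : ℝ) * (M : ℝ)⁻¹ + n * (K : ℝ)⁻¹ ≥ 1 then (1 : ℝ) else 0)
      = ⌊(M : ℝ) / K * n⌋ := by
  rcases Nat.eq_zero_or_pos M with rfl | hM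
  · simp
  have hM' : (0 : ℝ) < M := by exact_mod_cast hM
  have hK : (0 : ℝ) < K := by exact_mod_cast hn.trans_le' n.zero_le
  have hx : (M : ℝ) / K * n < M + 1 := by
    have : (n : ℝ) < K := by exact_mod_cast hn
    calc (M : ℝ) / K * n ≤ M / K * K := by gcongr
      _ < M + 1 := by field_simp; linarith
  have hcond : ∀ i : ℕ,
      (i : ℝ) * (M : ℝ)⁻¹ + n * (K : ℝ)⁻¹ ≥ 1 ↔ (M : ℝ) ≤ i + M / K * n := fun i => by
    rw [ge_iff_le, ← mul_le_mul_iff_of_pos_right hM', one_mul]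
    field_simp
  have hx0 : (0 : ℝ) ≤ M / K * n := by positivity
  simp_rw [hcond, sum_boole, card_filter_range_le_add M hx, natCast_floor_eq_intCast_floor hx0]

/-- `K` random levels on a grid of `M` points; `N` random bits and `D` excess bits are
`K = 2 ^ N` and `M = 2 ^ D`. -/
noncomputable def srffBias (M K : ℕ) : ℝ :=
  (M : ℝ)⁻¹ * ∑ i ∈ range M, ((K : ℝ)⁻¹ * ∑ n ∈ range K,
      (if (i : ℝ) * (M : ℝ)⁻¹ + n * (K : ℝ)⁻¹ ≥ 1 then (1 : ℝ) else 0) - i * (M : ℝ)⁻¹)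

theorem srffBias_eq (M K : ℕ) (hM : M ≠ 0) :
    srffBias M K = (K : ℝ)⁻¹ * ∑ n ∈ range K, (M : ℝ)⁻¹ * (⌊(M : ℝ) / K * n⌋ : ℝ)
      - (1 - (M : ℝ)⁻¹) / 2 := by
  have hcount : ∑ n ∈ range K, ∑ i ∈ range M,
      (if (i : ℝ) * (M : ℝ)⁻¹ + n * (K : ℝ)⁻¹ ≥ 1 then (1 : ℝ) else 0)
        = ∑ n ∈ range K, (⌊(M : ℝ) / K * n⌋ : ℝ) :=
    sum_congr rfl fun n hn => sum_range_ite_add_ge_one M K n (mem_range.mp hn)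
  have hgauss := sum_range_natCast_mul_two (R := ℝ) M
  have hM' : (M : ℝ) ≠ 0 := by exact_mod_cast hM
  rw [srffBias, sum_sub_distrib, ← mul_sum, ← sum_mul, sum_comm, hcount, ← mul_sum]
  field_simp
  linear_combination -hgauss

theorem srffBias_le (M K : ℕ) (hM : M ≠ 0) : srffBias M K ≤ ((M : ℝ)⁻¹ - (K : ℝ)⁻¹) / 2 := by
  rw [srffBias_eq M K hM]
  rcases Nat.eq_zero_or_pos K with rfl | hK
  · rw [range_zero, sum_empty, mul_zero, Nat.cast_zero, inv_zero]
    linarith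
  have hM' : (M : ℝ) ≠ 0 := by exact_mod_cast hM
  have hK' : (K : ℝ) ≠ 0 := by positivity
  have hfloor (n : ℕ) : (M : ℝ)⁻¹ * ⌊(M : ℝ) / K * n⌋ ≤ (K : ℝ)⁻¹ * n :=
    calc (M : ℝ)⁻¹ * ⌊(M : ℝ) / K * n⌋ ≤ (M : ℝ)⁻¹ * ((M : ℝ) / K * n) := by
          gcongr; exact Int.floor_le _
      _ = (K : ℝ)⁻¹ * n := by field_simp
  have hgauss := sum_range_natCast_mul_two (R := ℝ) K
  have hmean : (K : ℝ)⁻¹ * ∑ n ∈ range K, (M : ℝ)⁻¹ * (⌊(M : ℝ) / K * n⌋ : ℝ)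
      ≤ (1 - (K : ℝ)⁻¹) / 2 :=
    calc (K : ℝ)⁻¹ * ∑ n ∈ range K, (M : ℝ)⁻¹ * (⌊(M : ℝ) / K * n⌋ : ℝ)
        ≤ (K : ℝ)⁻¹ * ∑ n ∈ range K, (K : ℝ)⁻¹ * n :=
          mul_le_mul_of_nonneg_left (sum_le_sum fun n _ => hfloor n) (by positivity)
      _ = (1 - (K : ℝ)⁻¹) / 2 := by
          rw [← mul_sum]
          field_simp
          linear_combination hgauss
  linarith

theorem srff_grid_bias_general (N D : ℕ) :
    (((2:ℝ)^D)⁻¹ * ∑ i ∈ Finset.range (2^D),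
        (((2:ℝ)^N)⁻¹ * ∑ n ∈ Finset.range (2^N),
            (if (i:ℝ) * ((2:ℝ)^D)⁻¹ + (n:ℝ) * ((2:ℝ)^N)⁻¹ ≥ 1 then (1:ℝ) else 0)
          - (i:ℝ) * ((2:ℝ)^D)⁻¹)
      = ((2:ℝ)^N)⁻¹ * ∑ n ∈ Finset.range (2^N),
          ((2:ℝ)^D)⁻¹ * (⌊(2:ℝ)^D / (2:ℝ)^N * (n:ℝ)⌋ : ℝ)
        - (1 - ((2:ℝ)^D)⁻¹)/2)
    ∧
    (((2:ℝ)^D)⁻¹ * ∑ i ∈ Finset.range (2^D),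
        (((2:ℝ)^N)⁻¹ * ∑ n ∈ Finset.range (2^N),
            (if (i:ℝ) * ((2:ℝ)^D)⁻¹ + (n:ℝ) * ((2:ℝ)^N)⁻¹ ≥ 1 then (1:ℝ) else 0)
          - (i:ℝ) * ((2:ℝ)^D)⁻¹)
      ≤ (((2:ℝ)^D)⁻¹ - ((2:ℝ)^N)⁻¹)/2) := by
  have hM : 2 ^ D ≠ 0 := by positivity
  have h_eq := srffBias_eq (2 ^ D) (2 ^ N) hM
  have h_le := srffBias_le (2 ^ D) (2 ^ N) hM
  simp only [srffBias] at h_eq h_le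
  push_cast at h_eq h_le
  exact ⟨h_eq, h_le⟩

theorem srff_grid_bias (N D : ℕ) (hN : 1 ≤ N) (hD : 1 ≤ D) :
    (((2:ℝ)^D)⁻¹ * ∑ i ∈ Finset.range (2^D),
        (((2:ℝ)^N)⁻¹ * ∑ n ∈ Finset.range (2^N),
            (if (i:ℝ) * ((2:ℝ)^D)⁻¹ + (n:ℝ) * ((2:ℝ)^N)⁻¹ ≥ 1 then (1:ℝ) else 0)
          - (i:ℝ) * ((2:ℝ)^D)⁻¹)
      = ((2:ℝ)^N)⁻¹ * ∑ n ∈ Finset.range (2^N),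
          ((2:ℝ)^D)⁻¹ * (⌊(2:ℝ)^D / (2:ℝ)^N * (n:ℝ)⌋ : ℝ)
        - (1 - ((2:ℝ)^D)⁻¹)/2)
    ∧
    (((2:ℝ)^D)⁻¹ * ∑ i ∈ Finset.range (2^D),
        (((2:ℝ)^N)⁻¹ * ∑ n ∈ Finset.range (2^N),
            (if (i:ℝ) * ((2:ℝ)^D)⁻¹ + (n:ℝ) * ((2:ℝ)^N)⁻¹ ≥ 1 then (1:ℝ) else 0)
          - (i:ℝ) * ((2:ℝ)^D)⁻¹)
      ≤ (((2:ℝ)^D)⁻¹ - ((2:ℝ)^N)⁻¹)/2) :=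
  srff_grid_bias_general N D
end

section
/- If N ≤ D (both natural numbers ≥ 1), then the bias of SRFF with N random bits on the grid {i·2^{-D} : i = 0,...,2^D-1} equals exactly (2^{-D} - 2^{-N})/2. In particular, SRFF is unbiased on this grid if and only if the bound is zero, which holds when N = D. -/
/-!
When the dither step `1 / L` is a multiple of the grid step `1 / K = 1 / (L b)`, the dither value
`n / L` rounds up exactly the top `n b` grid points. Swapping the two sums turns the bias into
`K⁻¹ (L⁻¹ b ∑_{n<L} n - K⁻¹ ∑_{i<K} i)`, and the two Gauss sums give `(K⁻¹ - L⁻¹) / 2`.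
-/

open Finset

/-- `bias_{SRFF,D}` of the paper is `srffGridBias (2 ^ D) (2 ^ N)`. -/
noncomputable def srffGridBias (K L : ℕ) : ℝ :=
  (K : ℝ)⁻¹ * ∑ i ∈ range K,
    ((L : ℝ)⁻¹ * ∑ n ∈ range L, (if (i : ℝ) * (K : ℝ)⁻¹ + n * (L : ℝ)⁻¹ ≥ 1 then (1 : ℝ) else 0)
      - i * (K : ℝ)⁻¹)

theorem card_filter_range_le_add_s4 {K m : ℕ} (hm : m ≤ K) :
    #{i ∈ range K | K ≤ i + m} = m := by
  have : {i ∈ range K | K ≤ i + m} = Ico (K - m) K := by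
    ext i
    simp only [mem_filter, mem_range, mem_Ico]
    omega
  rw [this, Nat.card_Ico]
  omega

theorem grid_add_dither_ge_one_iff {L b : ℕ} (hL : 0 < L) (hb : 0 < b) (i n : ℕ) :
    (i : ℝ) * ((L * b : ℕ) : ℝ)⁻¹ + n * (L : ℝ)⁻¹ ≥ 1 ↔ L * b ≤ i + n * b := by
  have hLb : (0 : ℝ) < L * b := by positivity
  have : (i : ℝ) * ((L * b : ℕ) : ℝ)⁻¹ + n * (L : ℝ)⁻¹ = (i + n * b : ℕ) / (L * b : ℕ) := by
    push_cast
    field_simp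
  rw [this, ge_iff_le, one_le_div (by exact_mod_cast hLb), Nat.cast_le]

theorem sum_grid_round_up {L b n : ℕ} (hL : 0 < L) (hb : 0 < b) (hn : n < L) :
    ∑ i ∈ range (L * b),
        (if (i : ℝ) * ((L * b : ℕ) : ℝ)⁻¹ + n * (L : ℝ)⁻¹ ≥ 1 then (1 : ℝ) else 0)
      = n * b := by
  simp_rw [grid_add_dither_ge_one_iff hL hb, sum_boole]
  rw [card_filter_range_le_add_s4 (Nat.mul_le_mul_right b hn.le)]
  push_cast
  ring

theorem srffGridBias_of_dvd {K L : ℕ} (hK : 0 < K) (hLK : L ∣ K) :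
    srffGridBias K L = ((K : ℝ)⁻¹ - (L : ℝ)⁻¹) / 2 := by
  obtain ⟨b, rfl⟩ := hLK
  have hL : 0 < L := Nat.pos_of_mul_pos_right hK
  have hb : 0 < b := Nat.pos_of_mul_pos_left hK
  have hround : ∑ n ∈ range L, ∑ i ∈ range (L * b),
      (if (i : ℝ) * ((L * b : ℕ) : ℝ)⁻¹ + n * (L : ℝ)⁻¹ ≥ 1 then (1 : ℝ) else 0)
        = (∑ n ∈ range L, (n : ℝ)) * b := by
    rw [sum_mul]
    exact sum_congr rfl fun n hn => sum_grid_round_up hL hb (mem_range.mp hn)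
  unfold srffGridBias
  rw [sum_sub_distrib, ← mul_sum, sum_comm, hround, ← sum_mul]
  have hLr : (L : ℝ) ≠ 0 := by positivity
  have hbr : (b : ℝ) ≠ 0 := by positivity
  have gaussL := sum_range_natCast_mul_two (R := ℝ) L
  have gaussK := sum_range_natCast_mul_two (R := ℝ) (L * b)
  push_cast at gaussK ⊢
  field_simp
  linear_combination (b : ℝ) ^ 2 * gaussL - gaussK

theorem srff_grid_bias_exact_general (N D : ℕ) (hND : N ≤ D) :
    (((2:ℝ)^D)⁻¹ * ∑ i ∈ Finset.range (2^D),
        (((2:ℝ)^N)⁻¹ * ∑ n ∈ Finset.range (2^N),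
            (if (i:ℝ) * ((2:ℝ)^D)⁻¹ + (n:ℝ) * ((2:ℝ)^N)⁻¹ ≥ 1 then (1:ℝ) else 0)
          - (i:ℝ) * ((2:ℝ)^D)⁻¹)
      = (((2:ℝ)^D)⁻¹ - ((2:ℝ)^N)⁻¹)/2)
    ∧
    ((((2:ℝ)^D)⁻¹ * ∑ i ∈ Finset.range (2^D),
        (((2:ℝ)^N)⁻¹ * ∑ n ∈ Finset.range (2^N),
            (if (i:ℝ) * ((2:ℝ)^D)⁻¹ + (n:ℝ) * ((2:ℝ)^N)⁻¹ ≥ 1 then (1:ℝ) else 0)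
          - (i:ℝ) * ((2:ℝ)^D)⁻¹) = 0) ↔ N = D) := by
  have hbias : srffGridBias (2 ^ D) (2 ^ N) = (((2:ℝ)^D)⁻¹ - ((2:ℝ)^N)⁻¹) / 2 := by
    simpa using srffGridBias_of_dvd (Nat.two_pow_pos D) (Nat.pow_dvd_pow 2 hND)
  simp only [srffGridBias, Nat.cast_pow, Nat.cast_ofNat] at hbias
  refine ⟨hbias, ?_⟩
  rw [hbias, div_eq_zero_iff, or_iff_left two_ne_zero, sub_eq_zero, inv_inj,
    (pow_right_injective₀ two_pos (by norm_num : (2:ℝ) ≠ 1)).eq_iff, eq_comm]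

theorem srff_grid_bias_exact (N D : ℕ) (hN : 1 ≤ N) (hD : 1 ≤ D) (hND : N ≤ D) :
    (((2:ℝ)^D)⁻¹ * ∑ i ∈ Finset.range (2^D),
        (((2:ℝ)^N)⁻¹ * ∑ n ∈ Finset.range (2^N),
            (if (i:ℝ) * ((2:ℝ)^D)⁻¹ + (n:ℝ) * ((2:ℝ)^N)⁻¹ ≥ 1 then (1:ℝ) else 0)
          - (i:ℝ) * ((2:ℝ)^D)⁻¹)
      = (((2:ℝ)^D)⁻¹ - ((2:ℝ)^N)⁻¹)/2)
    ∧
    ((((2:ℝ)^D)⁻¹ * ∑ i ∈ Finset.range (2^D),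
        (((2:ℝ)^N)⁻¹ * ∑ n ∈ Finset.range (2^N),
            (if (i:ℝ) * ((2:ℝ)^D)⁻¹ + (n:ℝ) * ((2:ℝ)^N)⁻¹ ≥ 1 then (1:ℝ) else 0)
          - (i:ℝ) * ((2:ℝ)^D)⁻¹) = 0) ↔ N = D) :=
  srff_grid_bias_exact_general N D hND
end

section
/- For natural numbers N, D ≥ 1, the bias of SRF with N random bits on the grid with D excess bits satisfies bias_{SRF,D} ≤ 2^{-(D+1)}. -/
/-!
With `K = 2^N` thresholds `(n + 1/2)/K`, SRF rounds `x ∈ [0, 1]` up for exactly `⌊K x + 1/2⌋`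
of them, so its mean is `x` rounded to the nearest multiple of `1/K` (ties up) and its bias at
`x` is that rounding error. For `D ≤ N` every grid point `i/2^D` is such a multiple, so the bias
vanishes. For `D > N`, with `P = 2^(D-N)`, the error at `i/2^D` is `2^-D` times the error of
rounding `i` to the nearest multiple of `P`; that is `P`-periodic in `i` and sums to `P/2` over
a period (the lower half rounds down by `r`, the upper half up by `P/2 - r`), so the average
error is exactly `2^-(D+1)`.
-/

open Finset Function

theorem Function.Periodic.sum_range_mul {M : Type*} [AddCommMonoid M] {f : ℕ → M} {P : ℕ}
    (hf : Periodic f P) (Q : ℕ) : ∑ i ∈ range (Q * P), f i = Q • ∑ i ∈ range P, f i := by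
  induction Q with
  | zero => simp
  | succ Q ih =>
    rw [Nat.succ_mul, sum_range_add, ih, succ_nsmul]
    congr 1
    exact sum_congr rfl fun r _ => by rw [add_comm]; exact_mod_cast hf.nat_mul Q r

/-- The error of rounding `x` to the nearest multiple of `K⁻¹`, ties up (for `x ≥ -1/(2K)`,
below which `⌊·⌋₊` truncates at `0`). -/
noncomputable def roundingError (K : ℕ) (x : ℝ) : ℝ := (K : ℝ)⁻¹ * ⌊K * x + 1 / 2⌋₊ - x

theorem srf_roundUp_count_eq_floor (K : ℕ) {x : ℝ} (hx : x ≤ 1) :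
    ∑ n ∈ range K, (if x + ((n : ℝ) + 1 / 2) * (K : ℝ)⁻¹ ≥ 1 then (1 : ℝ) else 0) =
      ⌊K * x + 1 / 2⌋₊ := by
  rcases Nat.eq_zero_or_pos K with rfl | hK
  · simp only [range_zero, sum_empty, CharP.cast_eq_zero, zero_mul, zero_add]
    norm_num [Nat.floor_eq_zero]
  set F := ⌊K * x + 1 / 2⌋₊
  have hKR : (0 : ℝ) < K := by exact_mod_cast hK
  have hFK : F ≤ K := Nat.lt_succ_iff.mp <| (Nat.floor_lt' K.succ_ne_zero).mpr <| by
    push_cast; nlinarith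
  have hcond : ∀ n ∈ range K, x + ((n : ℝ) + 1 / 2) * (K : ℝ)⁻¹ ≥ 1 ↔ K - F ≤ n := by
    intro n hn
    have hnK := mem_range.mp hn
    have hsub : K - n ≤ F ↔ ((K - n : ℕ) : ℝ) ≤ K * x + 1 / 2 := Nat.le_floor_iff' (by omega)
    rw [Nat.cast_sub hnK.le] at hsub
    rw [ge_iff_le, ← mul_le_mul_iff_of_pos_left hKR, mul_add, ← mul_assoc, mul_comm _ (_ + _),
      mul_assoc, mul_inv_cancel₀ hKR.ne', mul_one, mul_one]
    constructor <;> intro h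
    · have := hsub.mpr (by linarith); omega
    · have := hsub.mp (by omega); linarith
  rw [sum_congr rfl fun n hn => if_congr (hcond n hn) rfl rfl, sum_boole, range_eq_Ico,
    Ico_filter_le, Nat.card_Ico]
  congr 1
  omega

theorem srf_bias_eq_roundingError (K : ℕ) {x : ℝ} (hx : x ≤ 1) :
    (K : ℝ)⁻¹ * ∑ n ∈ range K, (if x + ((n : ℝ) + 1 / 2) * (K : ℝ)⁻¹ ≥ 1 then (1 : ℝ) else 0) - x
      = roundingError K x := by
  rw [srf_roundUp_count_eq_floor K hx, roundingError]

theorem roundingError_natCast_mul_inv_of_dvd {K L : ℕ} (hK : K ≠ 0) (hLK : L ∣ K) (i : ℕ) :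
    roundingError K (i * (L : ℝ)⁻¹) = 0 := by
  obtain ⟨E, rfl⟩ := hLK
  have hL : (L : ℝ) ≠ 0 := by exact_mod_cast left_ne_zero_of_mul hK
  have hfloor : ⌊((L * E : ℕ) : ℝ) * (i * (L : ℝ)⁻¹) + 1 / 2⌋₊ = E * i := by
    rw [show ((L * E : ℕ) : ℝ) * (i * (L : ℝ)⁻¹) + 1 / 2 = 1 / 2 + ((E * i : ℕ) : ℝ) by
      push_cast; field_simp; ring, Nat.floor_add_natCast (by norm_num)]
    norm_num
  rw [roundingError, hfloor]
  have hE : (E : ℝ) ≠ 0 := by exact_mod_cast right_ne_zero_of_mul hK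
  push_cast
  field_simp
  ring

/-- `2 * h * ((i + h) / (2 * h))` is `i` rounded to the nearest multiple of `2 * h`, ties up. -/
noncomputable def natRoundingError (h i : ℕ) : ℝ := 2 * h * ((i + h) / (2 * h) : ℕ) - i

theorem natRoundingError_periodic (h : ℕ) : Periodic (natRoundingError h) (2 * h) := by
  intro i
  rcases Nat.eq_zero_or_pos h with rfl | hh
  · simp [natRoundingError]
  have hdiv : (i + 2 * h + h) / (2 * h) = (i + h) / (2 * h) + 1 := by
    rw [add_right_comm, Nat.add_div_right _ (by omega)]
  simp only [natRoundingError]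
  push_cast [hdiv]
  ring

theorem sum_range_natRoundingError (h : ℕ) :
    ∑ r ∈ range (2 * h), natRoundingError h r = h := by
  have hlow : ∀ r ∈ range h, natRoundingError h r = -r := fun r hr => by
    have : (r + h) / (2 * h) = 0 := Nat.div_eq_of_lt (by simp at hr; omega)
    simp [natRoundingError, this]
  have hhigh : ∀ r ∈ range h, natRoundingError h (h + r) = h - r := fun r hr => by
    have : (h + r + h) / (2 * h) = 1 := by
      rw [mem_range] at hr
      rw [show h + r + h = r + 2 * h by ring, Nat.add_div_right _ (by omega),
        Nat.div_eq_of_lt (by omega)]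
    simp only [natRoundingError, this]
    push_cast
    ring
  have hgauss : ∀ m : ℕ, (∑ r ∈ range m, (r : ℝ)) * 2 = m * (m - 1) := by
    intro m
    induction m with
    | zero => simp
    | succ m ih => rw [sum_range_succ]; push_cast; linear_combination ih
  rw [two_mul, sum_range_add, sum_congr rfl hlow, sum_congr rfl hhigh, sum_neg_distrib,
    sum_sub_distrib, sum_const, card_range, nsmul_eq_mul]
  linear_combination -(hgauss h)

theorem roundingError_eq_natRoundingError {K h : ℕ} (hK : K ≠ 0) (hh : h ≠ 0) (i : ℕ) :
    roundingError K (i * ((K * (2 * h) : ℕ) : ℝ)⁻¹) =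
      natRoundingError h i / (K * (2 * h) : ℕ) := by
  have hfloor : ⌊(K : ℝ) * (i * ((K * (2 * h) : ℕ) : ℝ)⁻¹) + 1 / 2⌋₊ = (i + h) / (2 * h) := by
    rw [← Nat.floor_div_eq_div (K := ℝ)]
    congr 1
    push_cast
    field_simp
  rw [roundingError, hfloor, natRoundingError]
  push_cast
  field_simp

theorem sum_range_roundingError_mul_two_mul {K h : ℕ} (hK : K ≠ 0) (hh : h ≠ 0) :
    ∑ i ∈ range (K * (2 * h)), roundingError K (i * ((K * (2 * h) : ℕ) : ℝ)⁻¹) = 1 / 2 := by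
  simp_rw [roundingError_eq_natRoundingError hK hh, ← sum_div,
    (natRoundingError_periodic h).sum_range_mul, sum_range_natRoundingError, nsmul_eq_mul]
  push_cast
  field_simp

theorem srf_grid_bias_bound_general (N D : ℕ) :
    ((2:ℝ)^D)⁻¹ * ∑ i ∈ Finset.range (2^D),
        (((2:ℝ)^N)⁻¹ * ∑ n ∈ Finset.range (2^N),
            (if (i:ℝ) * ((2:ℝ)^D)⁻¹ + ((n:ℝ) + 1/2) * ((2:ℝ)^N)⁻¹ ≥ 1 then (1:ℝ) else 0)
          - (i:ℝ) * ((2:ℝ)^D)⁻¹)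
      ≤ ((2:ℝ)^(D+1))⁻¹ := by
  have hterm : ∀ i ∈ range (2 ^ D),
      ((2:ℝ)^N)⁻¹ * ∑ n ∈ Finset.range (2^N),
          (if (i:ℝ) * ((2:ℝ)^D)⁻¹ + ((n:ℝ) + 1/2) * ((2:ℝ)^N)⁻¹ ≥ 1 then (1:ℝ) else 0)
        - (i:ℝ) * ((2:ℝ)^D)⁻¹ = roundingError (2 ^ N) (i * ((2 ^ D : ℕ) : ℝ)⁻¹) := by
    intro i hi
    have hx : (i : ℝ) * ((2 ^ D : ℕ) : ℝ)⁻¹ ≤ 1 := by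
      rw [← div_eq_mul_inv, div_le_one (by positivity)]
      exact_mod_cast (mem_range.mp hi).le
    rw [← srf_bias_eq_roundingError _ hx]
    push_cast
    rfl
  rw [sum_congr rfl hterm]
  rcases le_or_gt D N with hDN | hND
  · have hzero : ∀ i ∈ range (2 ^ D), roundingError (2 ^ N) (i * ((2 ^ D : ℕ) : ℝ)⁻¹) = 0 :=
      fun i _ => roundingError_natCast_mul_inv_of_dvd (by positivity) (pow_dvd_pow 2 hDN) i
    rw [sum_eq_zero hzero, mul_zero]
    positivity
  · obtain ⟨M, rfl⟩ : ∃ M, D = N + (M + 1) := ⟨D - N - 1, by omega⟩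
    have hsplit : 2 ^ (N + (M + 1)) = 2 ^ N * (2 * 2 ^ M) := by ring
    rw [hsplit, sum_range_roundingError_mul_two_mul (by positivity) (by positivity)]
    exact le_of_eq (by ring)

theorem srf_grid_bias_bound (N D : ℕ) (hN : 1 ≤ N) (hD : 1 ≤ D) :
    ((2:ℝ)^D)⁻¹ * ∑ i ∈ Finset.range (2^D),
        (((2:ℝ)^N)⁻¹ * ∑ n ∈ Finset.range (2^N),
            (if (i:ℝ) * ((2:ℝ)^D)⁻¹ + ((n:ℝ) + 1/2) * ((2:ℝ)^N)⁻¹ ≥ 1 then (1:ℝ) else 0)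
          - (i:ℝ) * ((2:ℝ)^D)⁻¹)
      ≤ ((2:ℝ)^(D+1))⁻¹ :=
  srf_grid_bias_bound_general N D
end

section
/- For natural numbers N, D with N ≤ D, bias_{SRF,D} = 2^{-N} Σ_{n=0}^{2^N-1} 2^{-D}·⌊n·2^{D-N} + 2^{D-N-1}⌋ − (1 − 2^{-D})/2, and when N < D the floors are exact so the expression simplifies to 2^{-(D+1)}. -/
open Finset

/-! For a fixed offset `n`, the grid points `i / M` that round up are exactly the last
`⌊(n + 1/2) M / K⌋` of them, so averaging over the grid turns the rounding indicators into these
floors, while the grid itself has mean `(1 - 1/M) / 2`. When `2K ∣ M` every `(n + 1/2) M / K` is an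
integer, the floors are exact, and they average to `M / 2`. -/

/-- SRF rounding with the `K` offsets `(n + 1/2) / K`, averaged over the grid `i / M`, `i < M`:
`bias_{SRF,D}` is `srfBias (2 ^ N) (2 ^ D)`. -/
noncomputable def srfBias (K M : ℕ) : ℝ :=
  (M : ℝ)⁻¹ * ∑ i ∈ range M,
    ((K : ℝ)⁻¹ * ∑ n ∈ range K,
        (if (i : ℝ) * (M : ℝ)⁻¹ + ((n : ℝ) + 1/2) * (K : ℝ)⁻¹ ≥ 1 then (1 : ℝ) else 0)
      - (i : ℝ) * (M : ℝ)⁻¹)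

lemma card_filter_range_le_add_eq_floor (M : ℕ) {c : ℝ} (hc₀ : 0 ≤ c) (hcM : c ≤ M) :
    #{i ∈ range M | (M : ℝ) ≤ ((i : ℕ) : ℝ) + c} = ⌊c⌋₊ := by
  have hfloor : ⌊c⌋₊ ≤ M := Nat.floor_le_of_le hcM
  suffices {i ∈ range M | (M : ℝ) ≤ ((i : ℕ) : ℝ) + c} = Ico (M - ⌊c⌋₊) M by
    rw [this, Nat.card_Ico]; omega
  ext i
  simp only [mem_filter, mem_range, mem_Ico]
  constructor
  · rintro ⟨hi, hle⟩
    have : M - i ≤ ⌊c⌋₊ := (Nat.le_floor_iff hc₀).2 (by push_cast [hi.le]; linarith)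
    omega
  · rintro ⟨hle, hi⟩
    refine ⟨hi, ?_⟩
    have : ((M - i : ℕ) : ℝ) ≤ c := (Nat.le_floor_iff hc₀).1 (by omega)
    push_cast [hi.le] at this
    linarith

lemma sum_range_roundUp_eq_floor {K n : ℕ} (M : ℕ) (hn : n < K) :
    ∑ i ∈ range M,
        (if (i : ℝ) * (M : ℝ)⁻¹ + ((n : ℝ) + 1/2) * (K : ℝ)⁻¹ ≥ 1 then (1 : ℝ) else 0)
      = ⌊((n : ℝ) + 1/2) * (M / K)⌋₊ := by
  have hK : (0 : ℝ) < K := by exact_mod_cast (Nat.zero_le n).trans_lt hn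
  have hnK : (n : ℝ) + 1/2 ≤ K := by
    have : (n : ℝ) + 1 ≤ K := by exact_mod_cast hn
    linarith
  have hcond : ∀ i ∈ range M, ((i : ℝ) * (M : ℝ)⁻¹ + ((n : ℝ) + 1/2) * (K : ℝ)⁻¹ ≥ 1 ↔
      (M : ℝ) ≤ i + ((n : ℝ) + 1/2) * (M / K)) := by
    intro i hi
    have hM : (0 : ℝ) < M := by exact_mod_cast (Nat.zero_le i).trans_lt (mem_range.1 hi)
    rw [ge_iff_le, ← mul_le_mul_iff_of_pos_left hM]
    field_simp
  rw [sum_congr rfl fun i hi => if_congr (hcond i hi) rfl rfl, sum_boole,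
    card_filter_range_le_add_eq_floor M (by positivity)]
  calc ((n : ℝ) + 1/2) * (M / K) ≤ K * (M / K) := by gcongr
    _ = M := by field_simp

lemma sum_range_natCast_add_half (K : ℕ) : ∑ n ∈ range K, ((n : ℝ) + 1/2) = (K : ℝ) ^ 2 / 2 := by
  induction K with
  | zero => simp
  | succ K ih => rw [sum_range_succ, ih]; push_cast; ring

lemma srfBias_eq_sum_floor (K : ℕ) {M : ℕ} (hM : 0 < M) :
    srfBias K M = (K : ℝ)⁻¹ * ∑ n ∈ range K, (M : ℝ)⁻¹ * ⌊((n : ℝ) + 1/2) * (M / K)⌋₊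
      - (1 - (M : ℝ)⁻¹) / 2 := by
  have hgrid : ∑ i ∈ range M, (i : ℝ) * (M : ℝ)⁻¹ = (1 - (M : ℝ)⁻¹) / 2 * M := by
    have h := sum_range_natCast_add_half M
    rw [sum_add_distrib, sum_const, card_range, nsmul_eq_mul] at h
    rw [← sum_mul, show ∑ i ∈ range M, (i : ℝ) = (M : ℝ) ^ 2 / 2 - M / 2 by linarith]
    field_simp
  have hcounts : ∑ i ∈ range M, ∑ n ∈ range K,
        (if (i : ℝ) * (M : ℝ)⁻¹ + ((n : ℝ) + 1/2) * (K : ℝ)⁻¹ ≥ 1 then (1 : ℝ) else 0)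
      = ∑ n ∈ range K, (⌊((n : ℝ) + 1/2) * (M / K)⌋₊ : ℝ) := by
    rw [sum_comm]
    exact sum_congr rfl fun n hn => sum_range_roundUp_eq_floor M (mem_range.1 hn)
  rw [srfBias, sum_sub_distrib, ← mul_sum, hcounts, hgrid, ← mul_sum]
  generalize ∑ n ∈ range K, (⌊((n : ℝ) + 1/2) * (M / K)⌋₊ : ℝ) = S
  field_simp

lemma srfBias_eq_of_two_mul_dvd {K M : ℕ} (hM : 0 < M) (hKM : 2 * K ∣ M) :
    srfBias K M = (2 * (M : ℝ))⁻¹ := by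
  obtain ⟨q, rfl⟩ := hKM
  have hK : (K : ℝ) ≠ 0 := Nat.cast_ne_zero.2 (right_ne_zero_of_mul (left_ne_zero_of_mul hM.ne'))
  have hexact : ∀ n : ℕ, (⌊((n : ℝ) + 1/2) * ((2 * K * q : ℕ) / K)⌋₊ : ℝ)
      = ((n : ℝ) + 1/2) * ((2 * K * q : ℕ) / K) := by
    intro n
    have : ((n : ℝ) + 1/2) * ((2 * K * q : ℕ) / K) = (((2 * n + 1) * q : ℕ) : ℝ) := by
      push_cast; field_simp
    rw [this, Nat.floor_natCast]
  rw [srfBias_eq_sum_floor K hM]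
  simp_rw [hexact, ← mul_sum, ← sum_mul, sum_range_natCast_add_half]
  field_simp
  ring

theorem srf_grid_bias_floor_form_general (N D : ℕ) :
    (((2:ℝ)^D)⁻¹ * ∑ i ∈ Finset.range (2^D),
        (((2:ℝ)^N)⁻¹ * ∑ n ∈ Finset.range (2^N),
            (if (i:ℝ) * ((2:ℝ)^D)⁻¹ + ((n:ℝ) + 1/2) * ((2:ℝ)^N)⁻¹ ≥ 1 then (1:ℝ) else 0)
          - (i:ℝ) * ((2:ℝ)^D)⁻¹)
      = ((2:ℝ)^N)⁻¹ * ∑ n ∈ Finset.range (2^N),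
          ((2:ℝ)^D)⁻¹ * (⌊(n:ℝ) * ((2:ℝ)^D / (2:ℝ)^N) + (2:ℝ)^D / (2:ℝ)^(N+1)⌋ : ℝ)
        - (1 - ((2:ℝ)^D)⁻¹)/2)
    ∧
    (N < D →
      ((2:ℝ)^D)⁻¹ * ∑ i ∈ Finset.range (2^D),
        (((2:ℝ)^N)⁻¹ * ∑ n ∈ Finset.range (2^N),
            (if (i:ℝ) * ((2:ℝ)^D)⁻¹ + ((n:ℝ) + 1/2) * ((2:ℝ)^N)⁻¹ ≥ 1 then (1:ℝ) else 0)
          - (i:ℝ) * ((2:ℝ)^D)⁻¹)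
      = ((2:ℝ)^(D+1))⁻¹) := by
  have hbias : srfBias (2 ^ N) (2 ^ D) = ((2:ℝ)^D)⁻¹ * ∑ i ∈ Finset.range (2^D),
        (((2:ℝ)^N)⁻¹ * ∑ n ∈ Finset.range (2^N),
            (if (i:ℝ) * ((2:ℝ)^D)⁻¹ + ((n:ℝ) + 1/2) * ((2:ℝ)^N)⁻¹ ≥ 1 then (1:ℝ) else 0)
          - (i:ℝ) * ((2:ℝ)^D)⁻¹) := by
    simp only [srfBias, Nat.cast_pow, Nat.cast_ofNat]
  rw [← hbias]
  refine ⟨?_, fun hND => ?_⟩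
  · rw [srfBias_eq_sum_floor _ (by positivity)]
    push_cast
    congr 2
    refine sum_congr rfl fun n _ => ?_
    rw [show (n : ℝ) * (2 ^ D / 2 ^ N) + 2 ^ D / 2 ^ (N + 1) = ((n : ℝ) + 1/2) * (2 ^ D / 2 ^ N) by
      rw [pow_succ]; ring, natCast_floor_eq_intCast_floor (by positivity)]
  · have hdvd : 2 * 2 ^ N ∣ 2 ^ D := by rw [← pow_succ']; exact pow_dvd_pow 2 hND
    rw [srfBias_eq_of_two_mul_dvd (by positivity) hdvd, pow_succ']
    push_cast
    rfl

theorem srf_grid_bias_floor_form (N D : ℕ) (hN : 1 ≤ N) (hND : N ≤ D) :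
    (((2:ℝ)^D)⁻¹ * ∑ i ∈ Finset.range (2^D),
        (((2:ℝ)^N)⁻¹ * ∑ n ∈ Finset.range (2^N),
            (if (i:ℝ) * ((2:ℝ)^D)⁻¹ + ((n:ℝ) + 1/2) * ((2:ℝ)^N)⁻¹ ≥ 1 then (1:ℝ) else 0)
          - (i:ℝ) * ((2:ℝ)^D)⁻¹)
      = ((2:ℝ)^N)⁻¹ * ∑ n ∈ Finset.range (2^N),
          ((2:ℝ)^D)⁻¹ * (⌊(n:ℝ) * ((2:ℝ)^D / (2:ℝ)^N) + (2:ℝ)^D / (2:ℝ)^(N+1)⌋ : ℝ)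
        - (1 - ((2:ℝ)^D)⁻¹)/2)
    ∧
    (N < D →
      ((2:ℝ)^D)⁻¹ * ∑ i ∈ Finset.range (2^D),
        (((2:ℝ)^N)⁻¹ * ∑ n ∈ Finset.range (2^N),
            (if (i:ℝ) * ((2:ℝ)^D)⁻¹ + ((n:ℝ) + 1/2) * ((2:ℝ)^N)⁻¹ ≥ 1 then (1:ℝ) else 0)
          - (i:ℝ) * ((2:ℝ)^D)⁻¹)
      = ((2:ℝ)^(D+1))⁻¹) :=
  srf_grid_bias_floor_form_general N D
end
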